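/- Let n ≥ 2 and let φ : H_n → H_n be an injective group homomorphism. Then for each i ∈ {2,…,n} there exists a point x ∈ X_n with φ(α)(x) ≠ x whose orbit under φ(g_i) is infinite. Moreover, for any point x in the support of φ(α) whose orbit under φ(g_i) is infinite, the point φ(α)(x) also has infinite orbit under φ(g_i). -/

import Mathlib

/-! ## Houghton's groups: basic setup -/

/-- The underlying set of Houghton's group: `n` rays of discrete points;
`(i, p)` is the point at position `p` on the ray `R_i`. -/
abbrev XH (n : ℕ) : Type := Fin n × ℕ

/-- `g` acts, outside a finite set, as the translation by `m i` on the ray `R_i`. -/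
def HasTranslationVector {n : ℕ} (g : Equiv.Perm (XH n)) (m : Fin n → ℤ) : Prop :=
  ∃ K : Finset (XH n), ∀ x : XH n, x ∉ K →
    (g x).1 = x.1 ∧ ((g x).2 : ℤ) = (x.2 : ℤ) + m x.1

/-- An eventual translation of `X_n`. -/
def IsEventualTranslation {n : ℕ} (g : Equiv.Perm (XH n)) : Prop :=
  ∃ m : Fin n → ℤ, HasTranslationVector g m

/-- Houghton's group `H_n`: the group of all eventual translations of `X_n`. -/
def Houghton (n : ℕ) : Subgroup (Equiv.Perm (XH n)) where
  carrier := {g | IsEventualTranslation g}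
  one_mem' := ⟨0, ∅, fun x _ => by simp⟩
  mul_mem' := by
    rintro a b ⟨ma, Ka, hKa⟩ ⟨mb, Kb, hKb⟩
    classical
    refine ⟨ma + mb, Kb ∪ Kb.image b ∪ Ka.image b.symm, fun x hx => ?_⟩
    simp only [Finset.mem_union, not_or] at hx
    have hxb : x ∉ Kb := hx.1.1
    have hbx : b x ∉ Ka := by
      intro hc
      exact hx.2 (Finset.mem_image.mpr ⟨b x, hc, b.symm_apply_apply x⟩)
    obtain ⟨hb1, hb2⟩ := hKb x hxb
    obtain ⟨ha1, ha2⟩ := hKa (b x) hbx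
    refine ⟨?_, ?_⟩
    · show (a (b x)).1 = x.1
      rw [ha1, hb1]
    · show ((a (b x)).2 : ℤ) = (x.2 : ℤ) + (ma + mb) x.1
      rw [ha2, hb1, hb2, Pi.add_apply]
      ring
  inv_mem' := by
    rintro a ⟨m, K, hK⟩
    classical
    refine ⟨-m, K.image a, fun x hx => ?_⟩
    have hy : a⁻¹ x ∉ K := by
      intro hc
      exact hx (Finset.mem_image.mpr ⟨a⁻¹ x, hc, a.apply_symm_apply x⟩)
    obtain ⟨e1, e2⟩ := hK _ hy
    rw [show a (a⁻¹ x) = x from a.apply_symm_apply x] at e1 e2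
    refine ⟨e1.symm, ?_⟩
    rw [← e1] at e2
    rw [Pi.neg_apply]
    omega

/-- The subgroup of finitely supported permutations of `X_n`. -/
def FSymSub (n : ℕ) : Subgroup (Equiv.Perm (XH n)) where
  carrier := {g | {x | g x ≠ x}.Finite}
  one_mem' := by simp
  mul_mem' := by
    intro a b ha hb
    apply Set.Finite.subset (ha.union hb)
    intro x hx
    by_cases h : b x = x
    · left
      show a x ≠ x
      simpa [Equiv.Perm.mul_apply, h] using hx
    · right; exact h
  inv_mem' := by
    intro a ha
    apply Set.Finite.subset ha
    intro x hx
    show a x ≠ x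
    intro hc
    apply hx
    show a⁻¹ x = x
    conv_lhs => rw [← hc]
    exact a.symm_apply_apply x

/-- The subgroup of finitely supported even permutations of `X_n`:
products of an even number of transpositions. -/
def FAltSub (n : ℕ) : Subgroup (Equiv.Perm (XH n)) where
  carrier := {g | ∃ l : List (Equiv.Perm (XH n)),
    (∀ τ ∈ l, τ.IsSwap) ∧ Even l.length ∧ l.prod = g}
  one_mem' := ⟨[], by simp, by simp, by simp⟩
  mul_mem' := by
    rintro a b ⟨la, hla, hea, rfl⟩ ⟨lb, hlb, heb, rfl⟩
    refine ⟨la ++ lb, ?_, ?_, List.prod_append⟩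
    · intro τ hτ
      rcases List.mem_append.mp hτ with h | h
      exacts [hla τ h, hlb τ h]
    · simpa using hea.add heb
  inv_mem' := by
    rintro a ⟨l, hl, he, rfl⟩
    refine ⟨(l.map fun x => x⁻¹).reverse, ?_, by simpa using he,
      (List.prod_inv_reverse l).symm⟩
    intro τ hτ
    rw [List.mem_reverse, List.mem_map] at hτ
    obtain ⟨σ, hσ, rfl⟩ := hτ
    obtain ⟨x, y, hxy, rfl⟩ := hl σ hσ
    exact ⟨x, y, hxy, by rw [Equiv.swap_inv]⟩

/-- `FSym_n` and `FAlt_n` viewed as subgroups of `H_n`. -/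
def FSymIn (n : ℕ) : Subgroup (Houghton n) := (FSymSub n).comap (Houghton n).subtype

def FAltIn (n : ℕ) : Subgroup (Houghton n) := (FAltSub n).comap (Houghton n).subtype

/-- The index of the first ray `R_1`. -/
def ray0 (n : ℕ) (hn : 0 < n) : Fin n := ⟨0, hn⟩

/-- The underlying function of the generator `g_i`. -/
def gFun (n : ℕ) (hn : 0 < n) (i : Fin n) : XH n → XH n := fun x =>
  if x.1 = ray0 n hn then (if x.2 = 0 then (i, 0) else (ray0 n hn, x.2 - 1))
  else if x.1 = i then (i, x.2 + 1) else x

/-- The inverse of `gFun`. -/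
def gInvFun (n : ℕ) (hn : 0 < n) (i : Fin n) : XH n → XH n := fun x =>
  if x.1 = i then (if x.2 = 0 then (ray0 n hn, 0) else (i, x.2 - 1))
  else if x.1 = ray0 n hn then (ray0 n hn, x.2 + 1) else x

/-- The generator `g_i` of `H_n` (as a permutation): it translates the first ray
down by one, sends `(1,1)` to `(i,1)` and translates the ray `R_i` up by one. -/
def gGen (n : ℕ) (hn : 0 < n) (i : Fin n) (hi : i ≠ ray0 n hn) : Equiv.Perm (XH n) where
  toFun := gFun n hn i
  invFun := gInvFun n hn i
  left_inv := by
    rintro ⟨j, p⟩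
    show gInvFun n hn i (gFun n hn i (j, p)) = (j, p)
    simp only [gFun, gInvFun]
    split_ifs <;> simp_all [Prod.ext_iff] <;> omega
  right_inv := by
    rintro ⟨j, p⟩
    show gFun n hn i (gInvFun n hn i (j, p)) = (j, p)
    simp only [gFun, gInvFun]
    split_ifs <;> simp_all [Prod.ext_iff] <;> omega

/-- The translation vector of `g_i`. -/
def gVec (n : ℕ) (hn : 0 < n) (i : Fin n) : Fin n → ℤ :=
  fun j => if j = ray0 n hn then -1 else if j = i then 1 else 0

theorem gGen_mem (n : ℕ) (hn : 0 < n) (i : Fin n) (hi : i ≠ ray0 n hn) :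
    gGen n hn i hi ∈ Houghton n := by
  refine ⟨gVec n hn i, {(ray0 n hn, 0)}, ?_⟩
  rintro ⟨j, p⟩ hx
  rw [Finset.mem_singleton] at hx
  have hx' : j ≠ ray0 n hn ∨ p ≠ 0 := by
    by_contra h
    push_neg at h
    exact hx (by rw [h.1, h.2])
  show (gFun n hn i (j, p)).1 = j ∧ ((gFun n hn i (j, p)).2 : ℤ) = (p : ℤ) + gVec n hn i j
  simp only [gFun, gVec]
  split_ifs <;> simp_all [Prod.ext_iff] <;> omega

/-- The generator `g_i` as an element of `H_n`. -/
def hGen (n : ℕ) (hn : 0 < n) (i : Fin n) (hi : i ≠ ray0 n hn) : Houghton n :=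
  ⟨gGen n hn i hi, gGen_mem n hn i hi⟩

/-- The transposition `α` exchanging `(1,1)` and `(1,2)`. -/
def alphaPerm (n : ℕ) (hn : 0 < n) : Equiv.Perm (XH n) :=
  Equiv.swap (ray0 n hn, 0) (ray0 n hn, 1)

theorem alphaPerm_mem (n : ℕ) (hn : 0 < n) : alphaPerm n hn ∈ Houghton n := by
  refine ⟨0, {(ray0 n hn, 0), (ray0 n hn, 1)}, ?_⟩
  intro x hx
  simp only [Finset.mem_insert, Finset.mem_singleton, not_or] at hx
  rw [show alphaPerm n hn x = x from Equiv.swap_apply_of_ne_of_ne hx.1 hx.2]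
  simp

/-- `α` as an element of `H_n`. -/
def hAlpha (n : ℕ) (hn : 0 < n) : Houghton n := ⟨alphaPerm n hn, alphaPerm_mem n hn⟩

theorem alphaPerm_mem_FSym (n : ℕ) (hn : 0 < n) : alphaPerm n hn ∈ FSymSub n := by
  show {x | alphaPerm n hn x ≠ x}.Finite
  apply Set.Finite.subset ((Set.finite_singleton (ray0 n hn, 1)).insert (ray0 n hn, 0))
  intro x hx
  by_contra hc
  simp only [Set.mem_insert_iff, Set.mem_singleton_iff, not_or] at hc
  exact hx (Equiv.swap_apply_of_ne_of_ne hc.1 hc.2)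

theorem swap_mem_houghton {n : ℕ} (P Q : XH n) : Equiv.swap P Q ∈ Houghton n := by
  classical
  refine ⟨0, {P, Q}, ?_⟩
  intro x hx
  simp only [Finset.mem_insert, Finset.mem_singleton, not_or] at hx
  rw [Equiv.swap_apply_of_ne_of_ne hx.1 hx.2]
  simp

/-- The transposition exchanging two points, as an element of `H_n`. -/
def hSwap {n : ℕ} (P Q : XH n) : Houghton n := ⟨Equiv.swap P Q, swap_mem_houghton P Q⟩

/-- The set of generators `{g_2, …, g_n}` of `H_n`. -/
def houghtonGensOnly (n : ℕ) (hn : 0 < n) : Set (Houghton n) :=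
  {x | ∃ (i : Fin n) (hi : i ≠ ray0 n hn), x = hGen n hn i hi}

/-- The chosen generating set of `H_n`: `{g_2, …, g_n}` for `n ≠ 2`,
and `{g_2, α}` for `n = 2`. -/
def houghtonGenSet (n : ℕ) (hn : 0 < n) : Set (Houghton n) :=
  if n = 2 then houghtonGensOnly n hn ∪ {hAlpha n hn} else houghtonGensOnly n hn

/-- Word length with respect to a set of generators (and their inverses). -/
noncomputable def wordLength {G : Type*} [Group G] (S : Set G) (g : G) : ℕ :=
  sInf {k | ∃ l : List G, (∀ x ∈ l, x ∈ S ∨ x⁻¹ ∈ S) ∧ l.length = k ∧ l.prod = g}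

/-- The growth rate of an endomorphism `φ`:
`GR(φ) = sup_g limsup_k |φ^k(g)|^{1/k}`. -/
noncomputable def growthRate {G : Type*} [Group G] (S : Set G) (φ : G →* G) : ℝ :=
  ⨆ g : G, Filter.limsup
    (fun k : ℕ => (wordLength S ((⇑φ)^[k] g) : ℝ) ^ (1 / (k : ℝ))) Filter.atTop

/-- The orbit of `x` under the permutation `h`. -/
def permOrbit {α : Type*} (h : Equiv.Perm α) (x : α) : Set α :=
  Set.range (fun k : ℤ => (h ^ k) x)

/-- `x` has infinite orbit under `h` (`x` is an essential point of `h`). -/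
def InfiniteOrbit {α : Type*} (h : Equiv.Perm α) (x : α) : Prop :=
  (permOrbit h x).Infinite

/-- The image `φ(g_i)` as a permutation of `X_n`. -/
def imageGen {n : ℕ} (h0 : 0 < n) (φ : Houghton n →* Houghton n)
    (i : Fin n) (hi : i ≠ ray0 n h0) : Equiv.Perm (XH n) :=
  ↑(φ (hGen n h0 i hi))

/-- The image `φ(α)` as a permutation of `X_n`. -/
def imageAlpha {n : ℕ} (h0 : 0 < n) (φ : Houghton n →* Houghton n) : Equiv.Perm (XH n) :=
  ↑(φ (hAlpha n h0))

/-- A transposition-orbit of an involution: a pair `{x, h x}` with `h x ≠ x`. -/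
def TOrbit {Ω : Type*} (h : Equiv.Perm Ω) (T : Set Ω) : Prop :=
  ∃ x, h x ≠ x ∧ T = {x, h x}

/-- The zero-sum vectors in `ℤ^n`. -/
def zeroSum (n : ℕ) : AddSubgroup (Fin n → ℤ) where
  carrier := {m | ∑ j, m j = 0}
  zero_mem' := by simp
  add_mem' := by
    intro a b ha hb
    simp only [Set.mem_setOf_eq] at *
    simp [Finset.sum_add_distrib, ha, hb]
  neg_mem' := by
    intro a ha
    simp only [Set.mem_setOf_eq] at *
    simp [ha]

/-!
The point is that `g_i⁻ᵏ α g_iᵏ` is the transposition of `(1,k+1)` and `(1,k+2)`, so `α`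
commutes with it for `k ≥ 2` but not with any power `g_iᴾ`, `P > 0`. Since `φ(α)` is an
involution in `H_n`, its translation vector vanishes and its support is finite. If every point of that support had a finite
`φ(g_i)`-orbit, a common period `P` would make `φ(g_i)ᴾ` and `φ(α)` disjoint, hence commuting,
and injectivity of `φ` would make `g_iᴾ` commute with `α`. For the second part, if `x` has an
infinite orbit and `φ(α) x` has period `p`, pick a large multiple `k` of `p` with `φ(g_i)ᵏ x`
outside the support of `φ(α)`; evaluating the commutation of `φ(α)` with its `φ(g_i)ᵏ`-conjugate
at `x` forces `φ(α) x = x`.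
-/

open Function

section Orbit

variable {β : Type*} {σ : Equiv.Perm β} {x : β}

theorem not_infiniteOrbit_iff_mem_periodicPts :
    ¬ InfiniteOrbit σ x ↔ x ∈ periodicPts σ := by
  rw [InfiniteOrbit, Set.not_infinite]
  constructor
  · intro hfin
    obtain ⟨a, b, hab, heq⟩ := Set.Finite.exists_lt_map_eq_of_forall_mem (t := permOrbit σ x)
      (f := fun k : ℕ => (σ ^ k) x) (fun k => ⟨k, by simp⟩) hfin
    simp only [Equiv.Perm.coe_pow] at heq
    exact mk_mem_periodicPts (by omega) (iterate_cancel σ.injective heq.symm)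
  · intro hx
    refine ((Set.finite_Iio (minimalPeriod σ x)).image fun k : ℕ => (σ ^ k) x).subset ?_
    rintro _ ⟨k, rfl⟩
    have hpos : (0 : ℤ) < minimalPeriod σ x := by
      exact_mod_cast minimalPeriod_pos_of_mem_periodicPts hx
    have hlt := Int.emod_lt_of_pos k hpos
    have hnn := Int.emod_nonneg k hpos.ne'
    refine ⟨(k % (minimalPeriod σ x : ℤ)).toNat, Set.mem_Iio.mpr (by omega), ?_⟩
    show (σ ^ _) x = (σ ^ k) x
    rw [← zpow_natCast, Int.toNat_of_nonneg hnn]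
    exact MulAction.zpow_smul_mod_minimalPeriod σ x k

theorem InfiniteOrbit.injective_pow_apply (hx : InfiniteOrbit σ x) :
    Injective fun k : ℕ => (σ ^ k) x := by
  intro a b hab
  simp only [Equiv.Perm.coe_pow] at hab
  by_contra hne
  refine not_infiniteOrbit_iff_mem_periodicPts.mpr ?_ hx
  rcases Nat.lt_or_gt_of_ne hne with h | h
  · exact mk_mem_periodicPts (by omega) (iterate_cancel σ.injective hab.symm)
  · exact mk_mem_periodicPts (by omega) (iterate_cancel σ.injective hab)

end Orbit

section PermCommute

variable {β : Type*} {A G : Equiv.Perm β}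

theorem exists_pow_commute_of_not_infiniteOrbit (hA : {y | A y ≠ y}.Finite)
    (hG : ∀ y, A y ≠ y → ¬ InfiniteOrbit G y) : ∃ P > 0, Commute A (G ^ P) := by
  have hper : ∀ y ∈ hA.toFinset, y ∈ periodicPts G := fun y hy =>
    not_infiniteOrbit_iff_mem_periodicPts.mp (hG y (hA.mem_toFinset.mp hy))
  refine ⟨∏ y ∈ hA.toFinset, minimalPeriod G y,
    Finset.prod_pos fun y hy => minimalPeriod_pos_of_mem_periodicPts (hper y hy), ?_⟩
  refine Equiv.Perm.Disjoint.commute fun y => or_iff_not_imp_left.mpr fun hy => ?_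
  have hy' : y ∈ hA.toFinset := hA.mem_toFinset.mpr hy
  rw [Equiv.Perm.coe_pow]
  exact (isPeriodicPt_minimalPeriod G y).trans_dvd (Finset.dvd_prod_of_mem _ hy')

theorem InfiniteOrbit.apply_of_commute_conj (hinv : Involutive A) (hA : {y | A y ≠ y}.Finite)
    (hcomm : ∀ k ≥ 2, Commute A (G⁻¹ ^ k * A * G ^ k)) (hx : InfiniteOrbit G x) :
    InfiniteOrbit G (A x) := by
  by_contra hAx
  obtain ⟨p, hp, hper⟩ := not_infiniteOrbit_iff_mem_periodicPts.mp hAx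
  obtain ⟨N, hN⟩ := (hA.preimage hx.injective_pow_apply.injOn).bddAbove
  set k := p * (N + 2)
  have hk : N + 2 ≤ k := Nat.le_mul_of_pos_left _ hp
  have hfix : A ((G ^ k) x) = (G ^ k) x := by
    by_contra h
    exact absurd (hN h) (by omega)
  have hperk : (G ^ k) (A x) = A x := by
    rw [Equiv.Perm.coe_pow]
    exact hper.mul_const _
  have hx_eq := congrArg (· x) (hcomm k (by omega)).eq
  simp only [Equiv.Perm.mul_apply] at hx_eq
  rw [inv_pow, Equiv.Perm.inv_def, hfix, hperk, hinv x, Equiv.symm_apply_apply] at hx_eq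
  have hAx_eq : A x = x := by
    rw [← hperk, hx_eq, Equiv.apply_symm_apply]
  exact hAx (by rwa [hAx_eq])

end PermCommute

section Houghton

variable {n : ℕ}

theorem HasTranslationVector.eq_zero_of_involutive {g : Equiv.Perm (XH n)} {m : Fin n → ℤ}
    (hm : HasTranslationVector g m) (hinv : Involutive g) : m = 0 := by
  obtain ⟨K, hK⟩ := hm
  have hout : ∀ y : XH n, K.sup Prod.snd < y.2 → y ∉ K := fun y hy hyK =>
    (Finset.le_sup (f := Prod.snd) hyK).not_gt hy
  funext j
  obtain ⟨N, hN⟩ : ∃ N, K.sup Prod.snd + (m j).natAbs < N := ⟨_, Nat.lt_succ_self _⟩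
  have hx : (j, N) ∉ K := hout _ (by dsimp only; omega)
  obtain ⟨h1, h2⟩ := hK _ hx
  dsimp only at h1 h2
  have hgx : g (j, N) ∉ K := hout _ (by omega)
  obtain ⟨-, h3⟩ := hK _ hgx
  rw [hinv, h1] at h3
  dsimp only at h3
  rw [Pi.zero_apply]
  omega

theorem IsEventualTranslation.finite_support_of_involutive {g : Equiv.Perm (XH n)}
    (hg : IsEventualTranslation g) (hinv : Involutive g) : {x | g x ≠ x}.Finite := by
  obtain ⟨m, K, hK⟩ := hg
  have hm0 := HasTranslationVector.eq_zero_of_involutive ⟨K, hK⟩ hinv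
  refine K.finite_toSet.subset fun x hx => ?_
  by_contra hxK
  obtain ⟨h1, h2⟩ := hK x hxK
  simp only [hm0, Pi.zero_apply, add_zero, Nat.cast_inj] at h2
  exact hx (Prod.ext h1 h2)

variable (h0 : 0 < n) (i : Fin n) (hi : i ≠ ray0 n h0)

theorem gGen_inv_pow_apply_ray0 (k p : ℕ) :
    ((gGen n h0 i hi)⁻¹ ^ k) (ray0 n h0, p) = (ray0 n h0, p + k) := by
  induction k with
  | zero => simp
  | succ k ih =>
    rw [pow_succ', Equiv.Perm.mul_apply, ih]
    show gInvFun n h0 i _ = _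
    simp [gInvFun, Ne.symm hi, Nat.add_assoc]

theorem gGen_inv_pow_mul_alphaPerm_mul_pow (k : ℕ) :
    (gGen n h0 i hi)⁻¹ ^ k * alphaPerm n h0 * gGen n h0 i hi ^ k
      = Equiv.swap (ray0 n h0, k) (ray0 n h0, k + 1) := by
  have h := Equiv.swap_apply_apply ((gGen n h0 i hi)⁻¹ ^ k) (ray0 n h0, 0) (ray0 n h0, 1)
  rw [gGen_inv_pow_apply_ray0, gGen_inv_pow_apply_ray0, zero_add, add_comm 1 k, inv_pow,
    inv_inv] at h
  rw [h, inv_pow]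
  rfl

theorem hGen_inv_pow_mul_hAlpha_mul_pow (k : ℕ) :
    (hGen n h0 i hi)⁻¹ ^ k * hAlpha n h0 * hGen n h0 i hi ^ k
      = hSwap (ray0 n h0, k) (ray0 n h0, k + 1) :=
  Subtype.ext (gGen_inv_pow_mul_alphaPerm_mul_pow h0 i hi k)

theorem commute_hAlpha_conj_hGen_pow {k : ℕ} (hk : 2 ≤ k) :
    Commute (hAlpha n h0) ((hGen n h0 i hi)⁻¹ ^ k * hAlpha n h0 * hGen n h0 i hi ^ k) := by
  rw [hGen_inv_pow_mul_hAlpha_mul_pow]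
  exact Commute.of_map (f := (Houghton n).subtype) Subtype.val_injective
    (Equiv.Perm.disjoint_swap_swap (by grind)).commute

theorem not_commute_hAlpha_hGen_pow {k : ℕ} (hk : 0 < k) :
    ¬ Commute (hAlpha n h0) (hGen n h0 i hi ^ k) := by
  intro h
  have h' := congrArg (fun a : Houghton n => a.1 (ray0 n h0, 0)) h.symm.inv_mul_cancel
  rw [← inv_pow, hGen_inv_pow_mul_hAlpha_mul_pow] at h'
  change Equiv.swap (ray0 n h0, k) (ray0 n h0, k + 1) (ray0 n h0, 0)
    = Equiv.swap (ray0 n h0, 0) (ray0 n h0, 1) (ray0 n h0, 0) at h'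
  rw [Equiv.swap_apply_left, Equiv.swap_apply_of_ne_of_ne (by simp [hk.ne]) (by simp)] at h'
  simp at h'

end Houghton

theorem monomorphism_alpha_moves_essential_point_general
    (n : ℕ) (h0 : 0 < n)
    (φ : Houghton n →* Houghton n) (hφ : Function.Injective φ)
    (i : Fin n) (hi : i ≠ ray0 n h0) :
    (∃ x : XH n, imageAlpha h0 φ x ≠ x ∧ InfiniteOrbit (imageGen h0 φ i hi) x) ∧
    (∀ x : XH n, imageAlpha h0 φ x ≠ x → InfiniteOrbit (imageGen h0 φ i hi) x →
      InfiniteOrbit (imageGen h0 φ i hi) (imageAlpha h0 φ x)) := by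
  set ψ := (Houghton n).subtype.comp φ
  have hψ : Injective ψ := Subtype.val_injective.comp hφ
  have hA : imageAlpha h0 φ = ψ (hAlpha n h0) := rfl
  have hG : imageGen h0 φ i hi = ψ (hGen n h0 i hi) := rfl
  have hα : hAlpha n h0 * hAlpha n h0 = 1 := Subtype.ext (Equiv.swap_mul_self _ _)
  have hinv : Involutive (imageAlpha h0 φ) := fun x => by
    rw [← Equiv.Perm.mul_apply, hA, ← map_mul, hα, map_one]
    rfl
  have hsupp : {x | imageAlpha h0 φ x ≠ x}.Finite :=
    (φ (hAlpha n h0)).2.finite_support_of_involutive hinv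
  refine ⟨?_, fun x _ hx => hx.apply_of_commute_conj hinv hsupp fun k hk => ?_⟩
  · by_contra! h
    obtain ⟨P, hP, hcomm⟩ := exists_pow_commute_of_not_infiniteOrbit hsupp h
    rw [hA, hG, ← map_pow] at hcomm
    exact not_commute_hAlpha_hGen_pow h0 i hi hP (hcomm.of_map hψ)
  · rw [hA, hG]
    simpa only [map_mul, map_pow, map_inv] using
      (commute_hAlpha_conj_hGen_pow h0 i hi hk).map ψ

/-- For `n ≥ 2`, an injective endomorphism `φ` of `H_n`, and any
`i ∈ {2,…,n}`: there is a point moved by `φ(α)` whose orbit under `φ(g_i)` is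
infinite; moreover for any point `x` in the support of `φ(α)` with infinite
orbit under `φ(g_i)`, the point `φ(α)(x)` also has infinite orbit under
`φ(g_i)`. -/
theorem monomorphism_alpha_moves_essential_point
    (n : ℕ) (hn : 2 ≤ n) (h0 : 0 < n)
    (φ : Houghton n →* Houghton n) (hφ : Function.Injective φ)
    (i : Fin n) (hi : i ≠ ray0 n h0) :
    (∃ x : XH n, imageAlpha h0 φ x ≠ x ∧ InfiniteOrbit (imageGen h0 φ i hi) x) ∧
    (∀ x : XH n, imageAlpha h0 φ x ≠ x → InfiniteOrbit (imageGen h0 φ i hi) x →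
      InfiniteOrbit (imageGen h0 φ i hi) (imageAlpha h0 φ x)) :=
  monomorphism_alpha_moves_essential_point_general n h0 φ hφ i hi
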